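/- arXiv:0912.4272 — 3 statements merged into one kernel-verified Lean document; each statement's English description precedes it below -/
import Mathlib

section
/- If (S,R) is a semigroup presentation and w⁻¹w' right-reverses (with respect to R) to v'·v⁻¹ for positive words w, w', v, v', then the words w·v' and w'·v are R-equivalent in the free monoid on S. -/
/-- A congruence on the free monoid of words over `S`: an equivalence relation
compatible with concatenation. -/
def IsCong {S : Type} (r : List S → List S → Prop) : Prop :=
  Equivalence r ∧ ∀ a b c d : List S, r a b → r c d → r (a ++ c) (b ++ d)

/-- `R`-equivalence: the smallest congruence on the free monoid `S*`
containing the relations `R`. -/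
def REquiv {S : Type} (R : List S → List S → Prop) (w w' : List S) : Prop :=
  ∀ r : List S → List S → Prop, IsCong r → (∀ a b, R a b → r a b) → r w w'

/-- The positive word `w` viewed as a signed word. -/
def wpos {S : Type} (w : List S) : List (S ⊕ S) := w.map Sum.inl

/-- The formal inverse `w⁻¹` of a positive word `w`, as a signed word. -/
def wneg {S : Type} (w : List S) : List (S ⊕ S) := (w.map Sum.inr).reverse

/-- One step of right-reversing with respect to `R`: replace a subword `s⁻¹t`
by `v'·v⁻¹` where `s·v' = t·v` is a relation of `R` (in either orientation),
including the trivial step `s⁻¹s ↷ ε`. -/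
def RevStep {S : Type} (R : List S → List S → Prop) (x y : List (S ⊕ S)) : Prop :=
  ∃ (u u' : List (S ⊕ S)) (s t : S) (v v' : List S),
    x = u ++ [Sum.inr s, Sum.inl t] ++ u' ∧
    y = u ++ wpos v' ++ wneg v ++ u' ∧
    (R (s :: v') (t :: v) ∨ R (t :: v) (s :: v') ∨ (s = t ∧ v = [] ∧ v' = []))

/-- Right-reversing: finitely many reversing steps. -/
def Rev {S : Type} (R : List S → List S → Prop) :
    List (S ⊕ S) → List (S ⊕ S) → Prop :=
  Relation.ReflTransGen (RevStep R)

/-- Completeness of a presentation with respect to right-reversing. -/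
def Complete {S : Type} (R : List S → List S → Prop) : Prop :=
  ∀ w w' : List S, REquiv R w w' → Rev R (wneg w ++ wpos w') []


section Stmt2Aux

variable {S : Type} {R : List S → List S → Prop}

lemma requiv_refl (a : List S) : REquiv R a a := fun _ hr _ => hr.1.refl a

lemma requiv_symm {a b : List S} (h : REquiv R a b) : REquiv R b a :=
  fun r hr hR => hr.1.symm (h r hr hR)

lemma requiv_trans {a b c : List S} (h1 : REquiv R a b) (h2 : REquiv R b c) : REquiv R a c :=
  fun r hr hR => hr.1.trans (h1 r hr hR) (h2 r hr hR)

lemma requiv_append {a b c d : List S} (h1 : REquiv R a b) (h2 : REquiv R c d) :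
    REquiv R (a ++ c) (b ++ d) :=
  fun r hr hR => hr.2 a b c d (h1 r hr hR) (h2 r hr hR)

lemma requiv_of_R {a b : List S} (h : R a b) : REquiv R a b := fun _ _ hR => hR a b h

lemma requiv_cons (s : S) {a b : List S} (h : REquiv R a b) : REquiv R (s :: a) (s :: b) := by
  have := requiv_append (requiv_refl (R := R) [s]) h
  simpa using this

/-- Traversal relation: reading the signed word `x` from the left transforms the
"pending positive word" `a` into `a''`, using `R`-equivalence at each positive letter. -/
inductive Trav (R : List S → List S → Prop) : List (S ⊕ S) → List S → List S → Prop
  | nil (a : List S) : Trav R [] a a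
  | pos {x : List (S ⊕ S)} {a a' a'' : List S} (s : S)
      (h : REquiv R a (s :: a')) (ht : Trav R x a' a'') : Trav R (Sum.inl s :: x) a a''
  | neg {x : List (S ⊕ S)} {a a'' : List S} (s : S)
      (ht : Trav R x (s :: a) a'') : Trav R (Sum.inr s :: x) a a''

lemma trav_append_iff (x y : List (S ⊕ S)) (a c : List S) :
    Trav R (x ++ y) a c ↔ ∃ m, Trav R x a m ∧ Trav R y m c := by
  induction x generalizing a with
  | nil =>
    constructor
    · intro h; exact ⟨a, Trav.nil a, h⟩
    · rintro ⟨m, h1, h2⟩; cases h1; exact h2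
  | cons ξ x ih =>
    constructor
    · intro h
      cases h with
      | pos s hs ht =>
        obtain ⟨m, h1, h2⟩ := (ih _).mp ht
        exact ⟨m, Trav.pos s hs h1, h2⟩
      | neg s ht =>
        obtain ⟨m, h1, h2⟩ := (ih _).mp ht
        exact ⟨m, Trav.neg s h1, h2⟩
    · rintro ⟨m, h1, h2⟩
      cases h1 with
      | pos s hs ht => exact Trav.pos s hs ((ih _).mpr ⟨m, ht, h2⟩)
      | neg s ht => exact Trav.neg s ((ih _).mpr ⟨m, ht, h2⟩)

lemma trav_pos_out {c m k : List S} (h : Trav R (wpos c) m k) : REquiv R m (c ++ k) := by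
  induction c generalizing m with
  | nil => cases h; exact requiv_refl _
  | cons s c ih =>
    cases h with
    | pos s' hs ht =>
      exact requiv_trans hs (requiv_cons _ (ih ht))

lemma trav_pos_intro (c m : List S) : Trav R (wpos c) (c ++ m) m := by
  induction c with
  | nil => exact Trav.nil m
  | cons s c ih => exact Trav.pos s (requiv_refl _) ih

lemma wneg_snoc (d : List S) (x : S) : wneg (d ++ [x]) = Sum.inr x :: wneg d := by
  simp [wneg]

lemma trav_neg_out {d m k : List S} (h : Trav R (wneg d) m k) : k = d ++ m := by
  induction d using List.reverseRecOn generalizing m with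
  | nil => cases h; rfl
  | append_singleton d x ih =>
    rw [wneg_snoc] at h
    cases h with
    | neg s ht =>
      have := ih ht
      simp [this]

lemma trav_neg_intro (d m : List S) : Trav R (wneg d) m (d ++ m) := by
  induction d using List.reverseRecOn generalizing m with
  | nil => exact Trav.nil m
  | append_singleton d x ih =>
    rw [wneg_snoc]
    have := Trav.neg (R := R) (x := wneg d) x (ih (x :: m))
    simpa using this

lemma revstep_trav {x y : List (S ⊕ S)} (hxy : RevStep R x y) {a k : List S}
    (h : Trav R y a k) : Trav R x a k := by
  obtain ⟨u, u', s, t, d, c, hx, hy, hrel⟩ := hxy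
  -- here y = u ++ wpos c ++ wneg d ++ u', relation on (s :: c) vs (t :: d)
  have hst : REquiv R (s :: c) (t :: d) := by
    rcases hrel with h | h | ⟨rfl, rfl, rfl⟩
    · exact requiv_of_R h
    · exact requiv_symm (requiv_of_R h)
    · exact requiv_refl _
  subst hx hy
  rw [show u ++ wpos c ++ wneg d ++ u' = u ++ (wpos c ++ (wneg d ++ u')) by simp] at h
  obtain ⟨m1, hu, h⟩ := (trav_append_iff _ _ _ _).mp h
  obtain ⟨m2, hc, h⟩ := (trav_append_iff _ _ _ _).mp h
  obtain ⟨m3, hd, hu'⟩ := (trav_append_iff _ _ _ _).mp h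
  have hm3 : m3 = d ++ m2 := trav_neg_out hd
  subst hm3
  rw [show u ++ [Sum.inr s, Sum.inl t] ++ u' = u ++ ([Sum.inr s, Sum.inl t] ++ u') by simp]
  refine (trav_append_iff _ _ _ _).mpr ⟨m1, hu, ?_⟩
  refine Trav.neg s (Trav.pos t ?_ hu')
  -- need : REquiv R (s :: m1) (t :: (d ++ m2))
  have h1 : REquiv R m1 (c ++ m2) := trav_pos_out hc
  have h2 : REquiv R (s :: m1) ((s :: c) ++ m2) := by
    have := requiv_cons s h1
    simpa using this
  have h3 : REquiv R ((s :: c) ++ m2) ((t :: d) ++ m2) :=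
    requiv_append hst (requiv_refl m2)
  exact requiv_trans h2 (by simpa using h3)

lemma rev_trav {x y : List (S ⊕ S)} (hxy : Rev R x y) {a k : List S}
    (h : Trav R y a k) : Trav R x a k := by
  induction hxy with
  | refl => exact h
  | tail _ hstep ih => exact ih (revstep_trav hstep h)

end Stmt2Aux

/-- If `w⁻¹w'` right-reverses to `v'·v⁻¹`, then `w·v'` and `w'·v` are
`R`-equivalent. -/
theorem stmt2 {S : Type} (R : List S → List S → Prop) (w w' v v' : List S)
    (h : Rev R (wneg w ++ wpos w') (wpos v' ++ wneg v)) :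
    REquiv R (w ++ v') (w' ++ v) := by
  -- The fully reversed word `wpos v' ++ wneg v` traverses `v'` to `v`.
  have hfin : Trav R (wpos v' ++ wneg v) v' v :=
    (trav_append_iff _ _ _ _).mpr ⟨[], by simpa using trav_pos_intro v' [],
      by simpa using trav_neg_intro v []⟩
  have htrav : Trav R (wneg w ++ wpos w') v' v := rev_trav h hfin
  obtain ⟨m, hw, hw'⟩ := (trav_append_iff _ _ _ _).mp htrav
  have hm : m = w ++ v' := trav_neg_out hw
  subst hm
  have := trav_pos_out hw'
  exact this
end

section
/- In the monoid presented by ⟨a,b,c | aba = b², aca = cb, bca = c²⟩, the elements a and b have the common right-multiples represented by a·ba = b·b and a·c²b = b·cac, but a and b admit no least common right-multiple; in particular cac is not a right-multiple of b. -/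
/-- The three generators. -/
inductive L : Type | a | b | c
open L

/-- The relations aba = b², aca = cb, bca = c². -/
def R10 : List L → List L → Prop := fun x y =>
  (x = [a,b,a] ∧ y = [b,b]) ∨ (x = [a,c,a] ∧ y = [c,b]) ∨
  (x = [b,c,a] ∧ y = [c,c])

section Aux

deriving instance DecidableEq for L

/-- One-step rewriting using a relation of `R10` in either direction, in context. -/
def Step (x y : List L) : Prop :=
  ∃ (u l r v : List L), x = u ++ l ++ v ∧ y = u ++ r ++ v ∧ (R10 l r ∨ R10 r l)

lemma Step.symm' {x y : List L} (h : Step x y) : Step y x := by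
  obtain ⟨u, l, r, v, hx, hy, hR⟩ := h
  exact ⟨u, r, l, v, hy, hx, hR.symm⟩

/-- Rewrites applying at the very head of the word. -/
def heads : List L → List (List L)
  | L.a :: L.b :: L.a :: t => [[L.b, L.b] ++ t]
  | L.b :: L.b :: t => [[L.a, L.b, L.a] ++ t]
  | L.a :: L.c :: L.a :: t => [[L.c, L.b] ++ t]
  | L.c :: L.b :: t => [[L.a, L.c, L.a] ++ t]
  | L.b :: L.c :: L.a :: t => [[L.c, L.c] ++ t]
  | L.c :: L.c :: t => [[L.b, L.c, L.a] ++ t]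
  | _ => []

/-- All one-step rewrites of a word. -/
def step1 : List L → List (List L)
  | [] => []
  | x :: t => heads (x :: t) ++ (step1 t).map (x :: ·)

lemma step_sound {x y : List L} (h : Step x y) : y ∈ step1 x := by
  obtain ⟨u, l, r, v, hx, hy, hR⟩ := h
  subst hx hy
  induction u with
  | nil =>
      rcases hR with (⟨hl, hr⟩ | ⟨hl, hr⟩ | ⟨hl, hr⟩) | (⟨hl, hr⟩ | ⟨hl, hr⟩ | ⟨hl, hr⟩) <;>
        subst hl hr <;> simp [step1, heads]
  | cons h t ih =>
      simp only [List.cons_append, step1, List.mem_append, List.mem_map]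
      exact Or.inr ⟨t ++ r ++ v, by simpa using ih, by simp⟩

lemma invariant (S : List (List L)) (hS : ∀ x ∈ S, ∀ y ∈ step1 x, y ∈ S)
    {x y : List L} (h : Relation.EqvGen Step x y) : x ∈ S ↔ y ∈ S := by
  induction h with
  | rel x y hxy => exact ⟨fun hx => hS x hx y (step_sound hxy),
      fun hy => hS y hy x (step_sound hxy.symm')⟩
  | refl => rfl
  | symm _ _ _ ih => exact ih.symm
  | trans _ _ _ _ _ ih1 ih2 => exact ih1.trans ih2

lemma step_ctx {p q : List L} (u v : List L) (h : Step p q) :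
    Step (u ++ p ++ v) (u ++ q ++ v) := by
  obtain ⟨u', l, r, v', hx, hy, hR⟩ := h
  exact ⟨u ++ u', l, r, v' ++ v, by simp [hx], by simp [hy], hR⟩

lemma eqv_ctx {p q : List L} (u v : List L) (h : Relation.EqvGen Step p q) :
    Relation.EqvGen Step (u ++ p ++ v) (u ++ q ++ v) := by
  induction h with
  | rel x y hxy => exact Relation.EqvGen.rel _ _ (step_ctx u v hxy)
  | refl x => exact Relation.EqvGen.refl _
  | symm _ _ _ ih => exact Relation.EqvGen.symm _ _ ih
  | trans _ _ _ _ _ ih1 ih2 => exact Relation.EqvGen.trans _ _ _ ih1 ih2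

lemma requiv_to {w w' : List L} (h : REquiv R10 w w') : Relation.EqvGen Step w w' := by
  refine h (Relation.EqvGen Step) ⟨Relation.EqvGen.is_equivalence Step, ?_⟩ ?_
  · intro p q s t h1 h2
    refine Relation.EqvGen.trans _ (q ++ s) _ ?_ ?_
    · simpa using eqv_ctx [] s h1
    · simpa using eqv_ctx q [] h2
  · intro p q hpq
    exact Relation.EqvGen.rel _ _ ⟨[], p, q, [], by simp, by simp, Or.inl hpq⟩

lemma requiv_refl_s10 (w : List L) : REquiv R10 w w := fun r hc _ => hc.1.refl w

lemma requiv_symm_s10 {w w' : List L} (h : REquiv R10 w w') : REquiv R10 w' w :=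
  fun r hc hR => hc.1.symm (h r hc hR)

lemma requiv_trans_s10 {w w' w'' : List L} (h1 : REquiv R10 w w') (h2 : REquiv R10 w' w'') :
    REquiv R10 w w'' := fun r hc hR => hc.1.trans (h1 r hc hR) (h2 r hc hR)

lemma requiv_append_s10 {p q s t : List L} (h1 : REquiv R10 p q) (h2 : REquiv R10 s t) :
    REquiv R10 (p ++ s) (q ++ t) := fun r hc hR => hc.2 _ _ _ _ (h1 r hc hR) (h2 r hc hR)

lemma requiv_of_R_s10 {p q : List L} (h : R10 p q) : REquiv R10 p q := fun _ _ hR => hR _ _ h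

lemma requiv_ctx (u v : List L) {p q : List L} (h : REquiv R10 p q) :
    REquiv R10 (u ++ p ++ v) (u ++ q ++ v) :=
  requiv_append_s10 (requiv_append_s10 (requiv_refl_s10 u) h) (requiv_refl_s10 v)

end Aux

/-- In ⟨a,b,c | aba = b², aca = cb, bca = c²⟩⁺, the elements a and b have the
common right-multiples a·ba = b·b and a·c²b = b·cac, but admit no least
common right-multiple; in particular cac is not a right-multiple of b. -/
theorem stmt10 :
    REquiv R10 [a,b,a] [b,b] ∧
    REquiv R10 [a,c,c,b] [b,c,a,c] ∧
    ¬ (∃ z : List L,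
        (∃ x y : List L, REquiv R10 z (a :: x) ∧ REquiv R10 z (b :: y)) ∧
        ∀ m : List L,
          (∃ x y : List L, REquiv R10 m (a :: x) ∧ REquiv R10 m (b :: y)) →
          ∃ t : List L, REquiv R10 m (z ++ t)) ∧
    ¬ (∃ t : List L, REquiv R10 [c,a,c] (b :: t)) := by
  have h1 : REquiv R10 [a,b,a] [b,b] := requiv_of_R_s10 (Or.inl ⟨rfl, rfl⟩)
  have raca : REquiv R10 [a,c,a] [c,b] := requiv_of_R_s10 (Or.inr (Or.inl ⟨rfl, rfl⟩))
  have rbca : REquiv R10 [b,c,a] [c,c] := requiv_of_R_s10 (Or.inr (Or.inr ⟨rfl, rfl⟩))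
  have h2 : REquiv R10 [a,c,c,b] [b,c,a,c] := by
    have s1 : REquiv R10 [a,c,c,b] [a,c,a,c,a] := by
      simpa using requiv_ctx [a,c] [] (requiv_symm_s10 raca)
    have s2 : REquiv R10 [a,c,a,c,a] [c,b,c,a] := by
      simpa using requiv_ctx [] [c,a] raca
    have s3 : REquiv R10 [c,b,c,a] [c,c,c] := by
      simpa using requiv_ctx [c] [] rbca
    have s4 : REquiv R10 [c,c,c] [b,c,a,c] := by
      simpa using requiv_ctx [] [c] (requiv_symm_s10 rbca)
    exact requiv_trans_s10 s1 (requiv_trans_s10 s2 (requiv_trans_s10 s3 s4))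
  refine ⟨h1, h2, ?_, ?_⟩
  · rintro ⟨z, ⟨x, y, hzx, hzy⟩, hlcm⟩
    obtain ⟨t1, ht1⟩ := hlcm [b,b] ⟨[b,a], [b], requiv_symm_s10 h1, requiv_refl_s10 _⟩
    obtain ⟨t2, ht2⟩ := hlcm [b,c,a,c] ⟨[c,c,b], [c,a,c], requiv_symm_s10 h2, requiv_refl_s10 _⟩
    have m1 : z ++ t1 ∈ [[b,b],[a,b,a]] :=
      (invariant [[b,b],[a,b,a]] (by decide) (requiv_to ht1)).mp (by simp)
    have hz : z = [] ∨ z = [b] ∨ z = [b,b] ∨ z = [a] ∨ z = [a,b] ∨ z = [a,b,a] := by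
      rcases z with _ | ⟨z1, _ | ⟨z2, _ | ⟨z3, z4⟩⟩⟩ <;> simp_all <;> tauto
    have S9closed : ∀ x ∈ [[b,c,a,c],[c,c,c],[c,b,c,a],[a,c,a,c,a],[a,c,c,b],[a,b,c,a,b]],
        ∀ y ∈ step1 x, y ∈ [[b,c,a,c],[c,c,c],[c,b,c,a],[a,c,a,c,a],[a,c,c,b],[a,b,c,a,b]] := by
      decide
    rcases hz with rfl | rfl | rfl | rfl | rfl | rfl
    · have := (invariant [([] : List L)] (by decide) (requiv_to hzy)).mp (by simp)
      simp at this
    · have := (invariant [[b]] (by decide) (requiv_to hzx)).mp (by simp)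
      simp at this
    · have := (invariant _ S9closed (requiv_to ht2)).mp (by simp)
      simp at this
    · have := (invariant [[a]] (by decide) (requiv_to hzy)).mp (by simp)
      simp at this
    · have := (invariant [[a,b]] (by decide) (requiv_to hzy)).mp (by simp)
      simp at this
    · have := (invariant _ S9closed (requiv_to ht2)).mp (by simp)
      simp at this
  · rintro ⟨t, ht⟩
    have := (invariant [[c,a,c]] (by decide) (requiv_to ht)).mp (by simp)
    simp at this
end

section
/- Let K be a van Kampen diagram for the braid monoid presentation and attribute to each edge the name (p,q,a) recording the initial positions p < q of the two strands crossing there and the rank a of that crossing, computed along any path from the source. Then in every hexagonal face (relation σᵢσⱼσᵢ = σⱼσᵢσⱼ, |i−j| = 1) the two sides carry name sequences ((p,q,a),(p,r,b),(q,r,c)) and ((q,r,c),(p,r,b),(p,q,a)) for some pairwise distinct p,q,r and integers a,b,c; and in every square face (σᵢσⱼ = σⱼσᵢ, |i−j| ≥ 2) the two sides carry ((p,q,a),(r,s,b)) and ((r,s,b),(p,q,a)) with p,q,r,s pairwise distinct. -/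
/-- The transposition of positions `i` and `i+1`. -/
def sw (i p : ℕ) : ℕ := if p = i then i + 1 else if p = i + 1 then i else p

/-- In the braid diagram of a positive braid word `w` (letter `i` standing for
`σᵢ`), the initial position of the strand located at position `p` after
performing the crossings of `w`. -/
def strandAt (w : List ℕ) (p : ℕ) : ℕ := w.foldr sw p

/-- The unordered pair of initial positions of the two strands involved in the
`k`-th crossing of the positive braid word `w`. -/
def crossPair (w : List ℕ) (k : ℕ) : Sym2 ℕ :=
  Sym2.mk (strandAt (w.take k) (w.getD k 0)) (strandAt (w.take k) (w.getD k 0 + 1))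

/-- The name `(p, q, a)` of the `k`-th crossing of `w`: the unordered pair
`{p, q}` of initial positions of the two crossing strands, together with the
rank `a` of this crossing among the crossings of this pair of strands. -/
def braidName (w : List ℕ) (k : ℕ) : Sym2 ℕ × ℕ :=
  (crossPair w k,
    ((List.range k).filter (fun k' => crossPair w k' = crossPair w k)).length + 1)


section helpers

lemma strandAt_append (u v : List ℕ) (p : ℕ) :
    strandAt (u ++ v) p = strandAt u (strandAt v p) := by
  simp [strandAt, List.foldr_append]

lemma sw_sw (i p : ℕ) : sw i (sw i p) = p := by
  unfold sw; split_ifs <;> omega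

lemma strandAt_injective (u : List ℕ) : Function.Injective (strandAt u) := by
  induction u with
  | nil => intro p q h; simpa [strandAt] using h
  | cons x w ih =>
    intro p q h
    apply ih
    have h' : sw x (strandAt w p) = sw x (strandAt w q) := h
    have := congrArg (sw x) h'
    simpa [sw_sw] using this

lemma crossPair_add (u v : List ℕ) (t : ℕ) :
    crossPair (u ++ v) (u.length + t) =
      Sym2.mk (strandAt u (strandAt (v.take t) (v.getD t 0)))
               (strandAt u (strandAt (v.take t) (v.getD t 0 + 1))) := by
  unfold crossPair
  rw [List.take_append, List.getD_append_right u v 0 _ (Nat.le_add_right _ _),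
    Nat.add_sub_cancel_left, strandAt_append, strandAt_append,
    List.take_of_length_le (Nat.le_add_right _ _)]

lemma crossPair_lt (u v : List ℕ) {k : ℕ} (hk : k < u.length) :
    crossPair (u ++ v) k = crossPair u k := by
  unfold crossPair
  rw [List.take_append_of_le_length (le_of_lt hk), List.getD_append u v 0 k hk]

lemma count_prefix (u x1 x2 : List ℕ) (S : Sym2 ℕ) :
    ((List.range u.length).filter (fun k' => crossPair (u ++ x1) k' = S)).length =
    ((List.range u.length).filter (fun k' => crossPair (u ++ x2) k' = S)).length := by
  congr 1
  apply List.filter_congr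
  intro k hk
  have h := (crossPair_lt u x1 (List.mem_range.mp hk)).trans
    (crossPair_lt u x2 (List.mem_range.mp hk)).symm
  simp [h]

lemma flt (w : List ℕ) (S : Sym2 ℕ) (L : ℕ) (h : crossPair w L ≠ S) :
    ((List.range (L + 1)).filter (fun k' => crossPair w k' = S)).length =
    ((List.range L).filter (fun k' => crossPair w k' = S)).length := by
  rw [List.range_succ, List.filter_append]
  simp [h]

lemma braidName_eq (w : List ℕ) (k : ℕ) (S : Sym2 ℕ) (h : crossPair w k = S) :
    braidName w k =
      (S, ((List.range k).filter (fun k' => crossPair w k' = S)).length + 1) := by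
  unfold braidName; rw [h]

lemma sym2_ne {p q r s : ℕ} (h1 : ¬(p = r ∧ q = s)) (h2 : ¬(p = s ∧ q = r)) :
    Sym2.mk p q ≠ Sym2.mk r s := by
  rw [Ne, Sym2.eq_iff]; tauto

lemma crossPair_zero (u : List ℕ) (x : ℕ) (v : List ℕ) :
    crossPair (u ++ (x :: v)) u.length =
      Sym2.mk (strandAt u x) (strandAt u (x + 1)) := by
  have h := crossPair_add u (x :: v) 0
  rw [Nat.add_zero] at h
  simpa [strandAt] using h

lemma crossPair_one (u : List ℕ) (x y : ℕ) (v : List ℕ) :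
    crossPair (u ++ (x :: y :: v)) (u.length + 1) =
      Sym2.mk (strandAt u (sw x y)) (strandAt u (sw x (y + 1))) := by
  have h := crossPair_add u (x :: y :: v) 1
  simpa [strandAt] using h

lemma crossPair_two (u : List ℕ) (x y z : ℕ) (v : List ℕ) :
    crossPair (u ++ (x :: y :: z :: v)) (u.length + 2) =
      Sym2.mk (strandAt u (sw x (sw y z))) (strandAt u (sw x (sw y (z + 1)))) := by
  have h := crossPair_add u (x :: y :: z :: v) 2
  simpa [strandAt] using h

end helpers

lemma hex_main (u u' : List ℕ) (i : ℕ) :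
    ∃ (p q r : ℕ) (a b c : ℕ), p ≠ q ∧ p ≠ r ∧ q ≠ r ∧
      [braidName (u ++ [i, i+1, i] ++ u') u.length,
       braidName (u ++ [i, i+1, i] ++ u') (u.length + 1),
       braidName (u ++ [i, i+1, i] ++ u') (u.length + 2)] =
        [(Sym2.mk p q, a), (Sym2.mk p r, b), (Sym2.mk q r, c)] ∧
      [braidName (u ++ [i+1, i, i+1] ++ u') u.length,
       braidName (u ++ [i+1, i, i+1] ++ u') (u.length + 1),
       braidName (u ++ [i+1, i, i+1] ++ u') (u.length + 2)] =
        [(Sym2.mk q r, c), (Sym2.mk p r, b), (Sym2.mk p q, a)] := by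
  simp only [List.append_assoc, List.cons_append, List.nil_append]
  set p := strandAt u i with hp
  set q := strandAt u (i+1) with hq
  set r := strandAt u (i+2) with hr
  have hpq : p ≠ q := (strandAt_injective u).ne (by omega)
  have hpr : p ≠ r := (strandAt_injective u).ne (by omega)
  have hqr : q ≠ r := (strandAt_injective u).ne (by omega)
  -- pairs of the first word
  have P10 : crossPair (u ++ (i :: (i+1) :: i :: u')) u.length = Sym2.mk p q :=
    crossPair_zero u i _
  have P11 : crossPair (u ++ (i :: (i+1) :: i :: u')) (u.length + 1) = Sym2.mk p r := by
    rw [crossPair_one u i (i+1) (i :: u')]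
    have e1 : sw i (i+1) = i := by unfold sw; split_ifs <;> omega
    have e2 : sw i (i+1+1) = i+2 := by unfold sw; split_ifs <;> omega
    rw [e1, e2]
  have P12 : crossPair (u ++ (i :: (i+1) :: i :: u')) (u.length + 2) = Sym2.mk q r := by
    rw [crossPair_two u i (i+1) i u']
    have e1 : sw i (sw (i+1) i) = i+1 := by unfold sw; split_ifs <;> omega
    have e2 : sw i (sw (i+1) (i+1)) = i+2 := by unfold sw; split_ifs <;> omega
    rw [e1, e2]
  -- pairs of the second word
  have P20 : crossPair (u ++ ((i+1) :: i :: (i+1) :: u')) u.length = Sym2.mk q r := by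
    have h := crossPair_zero u (i+1) (i :: (i+1) :: u')
    rw [h]
  have P21 : crossPair (u ++ ((i+1) :: i :: (i+1) :: u')) (u.length + 1) = Sym2.mk p r := by
    rw [crossPair_one u (i+1) i ((i+1) :: u')]
    have e1 : sw (i+1) i = i := by unfold sw; split_ifs <;> omega
    have e2 : sw (i+1) (i+1) = i+2 := by unfold sw; split_ifs <;> omega
    rw [e1, e2]
  have P22 : crossPair (u ++ ((i+1) :: i :: (i+1) :: u')) (u.length + 2) = Sym2.mk p q := by
    rw [crossPair_two u (i+1) i (i+1) u']
    have e1 : sw (i+1) (sw i (i+1)) = i := by unfold sw; split_ifs <;> omega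
    have e2 : sw (i+1) (sw i (i+1+1)) = i+1 := by unfold sw; split_ifs <;> omega
    rw [e1, e2]
  -- pair inequalities
  have npqpr : Sym2.mk p q ≠ Sym2.mk p r := sym2_ne (by tauto) (by tauto)
  have npqqr : Sym2.mk p q ≠ Sym2.mk q r := sym2_ne (by tauto) (by tauto)
  have nprqr : Sym2.mk p r ≠ Sym2.mk q r := sym2_ne (by tauto) (by tauto)
  have nqrpr : Sym2.mk q r ≠ Sym2.mk p r := nprqr.symm
  have nqrpq : Sym2.mk q r ≠ Sym2.mk p q := npqqr.symm
  have nprpq : Sym2.mk p r ≠ Sym2.mk p q := npqpr.symm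
  have hL2 : u.length + 2 = u.length + 1 + 1 := by omega
  have C : ∀ S : Sym2 ℕ,
      ((List.range u.length).filter
        (fun k' => crossPair (u ++ ((i+1) :: i :: (i+1) :: u')) k' = S)).length =
      ((List.range u.length).filter
        (fun k' => crossPair (u ++ (i :: (i+1) :: i :: u')) k' = S)).length :=
    fun S => count_prefix u _ _ S
  refine ⟨p, q, r,
    ((List.range u.length).filter
      (fun k' => crossPair (u ++ i :: (i+1) :: i :: u') k' = Sym2.mk p q)).length + 1,
    ((List.range u.length).filter
      (fun k' => crossPair (u ++ i :: (i+1) :: i :: u') k' = Sym2.mk p r)).length + 1,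
    ((List.range u.length).filter
      (fun k' => crossPair (u ++ i :: (i+1) :: i :: u') k' = Sym2.mk q r)).length + 1,
    hpq, hpr, hqr, ?_, ?_⟩
  · rw [braidName_eq _ _ _ P10, braidName_eq _ _ _ P11, braidName_eq _ _ _ P12,
      flt _ _ _ (P10 ▸ npqpr), hL2, flt _ _ _ (P11 ▸ nprqr), flt _ _ _ (P10 ▸ npqqr)]
  · rw [braidName_eq _ _ _ P20, braidName_eq _ _ _ P21, braidName_eq _ _ _ P22,
      flt _ _ _ (P20 ▸ nqrpr), hL2, flt _ _ _ (P21 ▸ nprpq), flt _ _ _ (P20 ▸ nqrpq),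
      C, C, C]

lemma sq_main (u u' : List ℕ) (i j : ℕ) (hij : i + 2 ≤ j) :
    ∃ (p q r s : ℕ) (a b : ℕ),
      p ≠ q ∧ p ≠ r ∧ p ≠ s ∧ q ≠ r ∧ q ≠ s ∧ r ≠ s ∧
      [braidName (u ++ [i, j] ++ u') u.length,
       braidName (u ++ [i, j] ++ u') (u.length + 1)] =
        [(Sym2.mk p q, a), (Sym2.mk r s, b)] ∧
      [braidName (u ++ [j, i] ++ u') u.length,
       braidName (u ++ [j, i] ++ u') (u.length + 1)] =
        [(Sym2.mk r s, b), (Sym2.mk p q, a)] := by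
  simp only [List.append_assoc, List.cons_append, List.nil_append]
  set p := strandAt u i with hp
  set q := strandAt u (i+1) with hq
  set r := strandAt u j with hr
  set s := strandAt u (j+1) with hs
  have hpq : p ≠ q := (strandAt_injective u).ne (by omega)
  have hpr : p ≠ r := (strandAt_injective u).ne (by omega)
  have hps : p ≠ s := (strandAt_injective u).ne (by omega)
  have hqr : q ≠ r := (strandAt_injective u).ne (by omega)
  have hqs : q ≠ s := (strandAt_injective u).ne (by omega)
  have hrs : r ≠ s := (strandAt_injective u).ne (by omega)
  have P10 : crossPair (u ++ (i :: j :: u')) u.length = Sym2.mk p q :=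
    crossPair_zero u i _
  have P11 : crossPair (u ++ (i :: j :: u')) (u.length + 1) = Sym2.mk r s := by
    rw [crossPair_one u i j u']
    have e1 : sw i j = j := by unfold sw; split_ifs <;> omega
    have e2 : sw i (j+1) = j+1 := by unfold sw; split_ifs <;> omega
    rw [e1, e2]
  have P20 : crossPair (u ++ (j :: i :: u')) u.length = Sym2.mk r s :=
    crossPair_zero u j _
  have P21 : crossPair (u ++ (j :: i :: u')) (u.length + 1) = Sym2.mk p q := by
    rw [crossPair_one u j i u']
    have e1 : sw j i = i := by unfold sw; split_ifs <;> omega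
    have e2 : sw j (i+1) = i+1 := by unfold sw; split_ifs <;> omega
    rw [e1, e2]
  have npqrs : Sym2.mk p q ≠ Sym2.mk r s := sym2_ne (by tauto) (by tauto)
  have nrspq : Sym2.mk r s ≠ Sym2.mk p q := npqrs.symm
  have C : ∀ S : Sym2 ℕ,
      ((List.range u.length).filter
        (fun k' => crossPair (u ++ (j :: i :: u')) k' = S)).length =
      ((List.range u.length).filter
        (fun k' => crossPair (u ++ (i :: j :: u')) k' = S)).length :=
    fun S => count_prefix u _ _ S
  refine ⟨p, q, r, s,
    ((List.range u.length).filter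
      (fun k' => crossPair (u ++ i :: j :: u') k' = Sym2.mk p q)).length + 1,
    ((List.range u.length).filter
      (fun k' => crossPair (u ++ i :: j :: u') k' = Sym2.mk r s)).length + 1,
    hpq, hpr, hps, hqr, hqs, hrs, ?_, ?_⟩
  · rw [braidName_eq _ _ _ P10, braidName_eq _ _ _ P11, flt _ _ _ (P10 ▸ npqrs)]
  · rw [braidName_eq _ _ _ P20, braidName_eq _ _ _ P21, flt _ _ _ (P20 ▸ nrspq), C, C]

/-- In a van Kampen diagram for the braid presentation, the two sides of every
hexagonal face `σᵢσⱼσᵢ = σⱼσᵢσⱼ` (`|i−j| = 1`) carry the name sequences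
`((p,q,a), (p,r,b), (q,r,c))` and `((q,r,c), (p,r,b), (p,q,a))` for pairwise
distinct `p, q, r`; and the two sides of every square face `σᵢσⱼ = σⱼσᵢ`
(`|i−j| ≥ 2`) carry `((p,q,a), (r,s,b))` and `((r,s,b), (p,q,a))` with
`p, q, r, s` pairwise distinct. -/
theorem stmt19 :
    (∀ (u u' : List ℕ) (i j : ℕ), (i + 1 = j ∨ j + 1 = i) →
      ∃ (p q r : ℕ) (a b c : ℕ), p ≠ q ∧ p ≠ r ∧ q ≠ r ∧
        [braidName (u ++ [i,j,i] ++ u') u.length,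
         braidName (u ++ [i,j,i] ++ u') (u.length + 1),
         braidName (u ++ [i,j,i] ++ u') (u.length + 2)] =
          [(Sym2.mk p q, a), (Sym2.mk p r, b), (Sym2.mk q r, c)] ∧
        [braidName (u ++ [j,i,j] ++ u') u.length,
         braidName (u ++ [j,i,j] ++ u') (u.length + 1),
         braidName (u ++ [j,i,j] ++ u') (u.length + 2)] =
          [(Sym2.mk q r, c), (Sym2.mk p r, b), (Sym2.mk p q, a)]) ∧
    (∀ (u u' : List ℕ) (i j : ℕ), (i + 2 ≤ j ∨ j + 2 ≤ i) →
      ∃ (p q r s : ℕ) (a b : ℕ),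
        p ≠ q ∧ p ≠ r ∧ p ≠ s ∧ q ≠ r ∧ q ≠ s ∧ r ≠ s ∧
        [braidName (u ++ [i,j] ++ u') u.length,
         braidName (u ++ [i,j] ++ u') (u.length + 1)] =
          [(Sym2.mk p q, a), (Sym2.mk r s, b)] ∧
        [braidName (u ++ [j,i] ++ u') u.length,
         braidName (u ++ [j,i] ++ u') (u.length + 1)] =
          [(Sym2.mk r s, b), (Sym2.mk p q, a)]) := by
  constructor
  · intro u u' i j h
    rcases h with h | h
    · subst h
      exact hex_main u u' i
    · subst h
      obtain ⟨p, q, r, a, b, c, hpq, hpr, hqr, H1, H2⟩ := hex_main u u' j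
      refine ⟨r, q, p, c, b, a, hqr.symm, hpr.symm, hpq.symm, ?_, ?_⟩
      · rw [H2, Sym2.eq_swap (a := q) (b := r), Sym2.eq_swap (a := p) (b := r),
          Sym2.eq_swap (a := p) (b := q)]
      · rw [H1, Sym2.eq_swap (a := p) (b := q), Sym2.eq_swap (a := p) (b := r),
          Sym2.eq_swap (a := q) (b := r)]
  · intro u u' i j h
    rcases h with h | h
    · exact sq_main u u' i j h
    · obtain ⟨p, q, r, s, a, b, hpq, hpr, hps, hqr, hqs, hrs, H1, H2⟩ := sq_main u u' j i h
      exact ⟨r, s, p, q, b, a, hrs, hpr.symm, hqr.symm, hps.symm, hqs.symm, hpq, H2, H1⟩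
end
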